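/- Let points A₁, A₂, A₃ lie on a line ℓ and points B₁, B₂, B₃ lie on a line m (with ℓ ≠ m) in the real projective plane. For each permutation (i,j,k) of (1,2,3) let Q_{ij} be the intersection of lines A_iB_k and B_jA_k. Then the three lines Q₁₂Q₂₁, Q₁₃Q₃₁, and Q₂₃Q₃₂ are concurrent. -/
import Mathlib

set_option linter.unreachableTactic false
set_option linter.unusedTactic false

/-- Collinearity of three points of the real projective plane,
given by homogeneous coordinate vectors in `ℝ³`. -/
def collin (u v w : Fin 3 → ℝ) : Prop :=
  Matrix.det (Matrix.of ![u, v, w]) = 0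

/-- `X` is the (well-defined) intersection point of the line through `u, v`
and the line through `w, z`. -/
def IsInter (u v w z X : Fin 3 → ℝ) : Prop :=
  X ≠ 0 ∧ LinearIndependent ℝ ![u, v] ∧ LinearIndependent ℝ ![w, z] ∧
    collin u v X ∧ collin w z X ∧ ¬ (collin u v w ∧ collin u v z)

/-- Cross product in `ℝ³`. -/
def cr (u v : Fin 3 → ℝ) : Fin 3 → ℝ :=
  ![u 1 * v 2 - u 2 * v 1, u 2 * v 0 - u 0 * v 2, u 0 * v 1 - u 1 * v 0]

/-- Dot product in `ℝ³`. -/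
def dt (u v : Fin 3 → ℝ) : ℝ := u 0 * v 0 + u 1 * v 1 + u 2 * v 2

lemma cr0 (u v : Fin 3 → ℝ) : cr u v 0 = u 1 * v 2 - u 2 * v 1 := rfl
lemma cr1 (u v : Fin 3 → ℝ) : cr u v 1 = u 2 * v 0 - u 0 * v 2 := rfl
lemma cr2 (u v : Fin 3 → ℝ) : cr u v 2 = u 0 * v 1 - u 1 * v 0 := rfl

lemma vec3_ext {u v : Fin 3 → ℝ} (h0 : u 0 = v 0) (h1 : u 1 = v 1) (h2 : u 2 = v 2) :
    u = v := by
  funext i; fin_cases i <;> assumption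

lemma vec3_eta (u : Fin 3 → ℝ) : u = ![u 0, u 1, u 2] :=
  vec3_ext rfl rfl rfl

lemma vec3_eq_zero_iff (u : Fin 3 → ℝ) : u = 0 ↔ u 0 = 0 ∧ u 1 = 0 ∧ u 2 = 0 := by
  constructor
  · intro h; rw [h]; exact ⟨rfl, rfl, rfl⟩
  · rintro ⟨h0, h1, h2⟩; exact vec3_ext h0 h1 h2

lemma collin_iff (u v w : Fin 3 → ℝ) : collin u v w ↔ dt (cr u v) w = 0 := by
  unfold collin dt
  rw [Matrix.det_fin_three]
  simp only [Matrix.of_apply, Matrix.cons_val', Matrix.cons_val_zero, Matrix.empty_val',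
    Matrix.cons_val_fin_one, Matrix.cons_val_one, Matrix.head_cons, Matrix.head_fin_const,
    Matrix.cons_val_two, Matrix.tail_cons, cr0, cr1, cr2]
  constructor <;> intro h <;> linear_combination h

lemma cr_smul_left (c : ℝ) (u v : Fin 3 → ℝ) : cr (c • u) v = c • cr u v :=
  vec3_ext (by simp only [cr0, Pi.smul_apply, smul_eq_mul]; ring)
    (by simp only [cr1, Pi.smul_apply, smul_eq_mul]; ring)
    (by simp only [cr2, Pi.smul_apply, smul_eq_mul]; ring)

lemma cr_smul_right (c : ℝ) (u v : Fin 3 → ℝ) : cr u (c • v) = c • cr u v :=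
  vec3_ext (by simp only [cr0, Pi.smul_apply, smul_eq_mul]; ring)
    (by simp only [cr1, Pi.smul_apply, smul_eq_mul]; ring)
    (by simp only [cr2, Pi.smul_apply, smul_eq_mul]; ring)

lemma dt_smul_left (c : ℝ) (u v : Fin 3 → ℝ) : dt (c • u) v = c * dt u v := by
  simp only [dt, Pi.smul_apply, smul_eq_mul]; ring

lemma dt_smul_right (c : ℝ) (u v : Fin 3 → ℝ) : dt u (c • v) = c * dt u v := by
  simp only [dt, Pi.smul_apply, smul_eq_mul]; ring

lemma dt_cr_left (u v : Fin 3 → ℝ) : dt (cr u v) u = 0 := by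
  simp only [dt, cr0, cr1, cr2]; ring

lemma dt_cr_right (u v : Fin 3 → ℝ) : dt (cr u v) v = 0 := by
  simp only [dt, cr0, cr1, cr2]; ring

lemma dt_cr_self_left (u v : Fin 3 → ℝ) : dt u (cr u v) = 0 := by
  simp only [dt, cr0, cr1, cr2]; ring

lemma dt_cr_self_right (u v : Fin 3 → ℝ) : dt v (cr u v) = 0 := by
  simp only [dt, cr0, cr1, cr2]; ring

/-- If the cross product vanishes and `u ≠ 0` then `v` is a multiple of `u`. -/
lemma cr_zero_dep {u v : Fin 3 → ℝ} (h : cr u v = 0) (hu : u ≠ 0) :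
    ∃ t : ℝ, v = t • u := by
  have h0 : u 1 * v 2 - u 2 * v 1 = 0 := by rw [← cr0 u v, h]; rfl
  have h1 : u 2 * v 0 - u 0 * v 2 = 0 := by rw [← cr1 u v, h]; rfl
  have h2 : u 0 * v 1 - u 1 * v 0 = 0 := by rw [← cr2 u v, h]; rfl
  have hcase : u 0 ≠ 0 ∨ u 1 ≠ 0 ∨ u 2 ≠ 0 := by
    by_contra hc
    push_neg at hc
    exact hu ((vec3_eq_zero_iff u).mpr ⟨hc.1, hc.2.1, hc.2.2⟩)
  rcases hcase with hk | hk | hk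
  · refine ⟨v 0 / u 0, vec3_ext ?_ ?_ ?_⟩ <;>
      simp only [Pi.smul_apply, smul_eq_mul] <;>
      rw [div_mul_eq_mul_div, eq_comm, div_eq_iff hk] <;>
      first | ring1 | linear_combination h0 | linear_combination -h0 |
        linear_combination h1 | linear_combination -h1 |
        linear_combination h2 | linear_combination -h2
  · refine ⟨v 1 / u 1, vec3_ext ?_ ?_ ?_⟩ <;>
      simp only [Pi.smul_apply, smul_eq_mul] <;>
      rw [div_mul_eq_mul_div, eq_comm, div_eq_iff hk] <;>
      first | ring1 | linear_combination h0 | linear_combination -h0 |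
        linear_combination h1 | linear_combination -h1 |
        linear_combination h2 | linear_combination -h2
  · refine ⟨v 2 / u 2, vec3_ext ?_ ?_ ?_⟩ <;>
      simp only [Pi.smul_apply, smul_eq_mul] <;>
      rw [div_mul_eq_mul_div, eq_comm, div_eq_iff hk] <;>
      first | ring1 | linear_combination h0 | linear_combination -h0 |
        linear_combination h1 | linear_combination -h1 |
        linear_combination h2 | linear_combination -h2

lemma cr_ne_zero {u v : Fin 3 → ℝ} (h : LinearIndependent ℝ ![u, v]) : cr u v ≠ 0 := by
  intro hcr
  by_cases hu : u = 0
  · have := (LinearIndependent.pair_iff.mp h 1 0 (by simp [hu])).1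
    norm_num at this
  · obtain ⟨t, ht⟩ := cr_zero_dep hcr hu
    have := (LinearIndependent.pair_iff.mp h t (-1) (by rw [ht]; module)).2
    norm_num at this

/-- Double cross product vanishing: if `L ⊥ X` and `L ⊥ N` then `(X × N) × L = 0`. -/
lemma cr_cr_eq_zero {L X N : Fin 3 → ℝ} (hX : dt L X = 0) (hN : dt L N = 0) :
    cr (cr X N) L = 0 := by
  unfold dt at hX hN
  refine vec3_ext ?_ ?_ ?_ <;> simp only [cr0, cr1, cr2, Pi.zero_apply]
  · linear_combination N 0 * hX - X 0 * hN
  · linear_combination N 1 * hX - X 1 * hN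
  · linear_combination N 2 * hX - X 2 * hN

/-- The intersection direction of two genuinely distinct lines is nonzero. -/
lemma cr_cr_ne_zero {u v w z : Fin 3 → ℝ}
    (h1 : LinearIndependent ℝ ![u, v]) (h2 : LinearIndependent ℝ ![w, z])
    (hnd : ¬ (collin u v w ∧ collin u v z)) :
    cr (cr u v) (cr w z) ≠ 0 := by
  intro h0
  obtain ⟨s, hs⟩ := cr_zero_dep h0 (cr_ne_zero h1)
  have hs0 : s ≠ 0 := by
    rintro rfl
    rw [zero_smul] at hs
    exact cr_ne_zero h2 hs
  apply hnd
  constructor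
  · rw [collin_iff]
    have hw : dt (cr w z) w = 0 := dt_cr_left w z
    rw [hs, dt_smul_left] at hw
    exact (mul_eq_zero.mp hw).resolve_left hs0
  · rw [collin_iff]
    have hz : dt (cr w z) z = 0 := dt_cr_right w z
    rw [hs, dt_smul_left] at hz
    exact (mul_eq_zero.mp hz).resolve_left hs0

/-- Any point satisfying `IsInter` is a nonzero multiple of the cross product
of the two line coordinates. -/
lemma isInter_rep {u v w z X : Fin 3 → ℝ} (h : IsInter u v w z X) :
    ∃ c : ℝ, c ≠ 0 ∧ X = c • cr (cr u v) (cr w z) := by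
  obtain ⟨hX0, hiuv, hiwz, hc1, hc2, hnd⟩ := h
  have hL1 : cr u v ≠ 0 := cr_ne_zero hiuv
  have hL2 : cr w z ≠ 0 := cr_ne_zero hiwz
  have h1 : dt (cr u v) X = 0 := (collin_iff u v X).mp hc1
  have h2 : dt (cr w z) X = 0 := (collin_iff w z X).mp hc2
  have hN : cr (cr u v) (cr w z) ≠ 0 := cr_cr_ne_zero hiuv hiwz hnd
  set N := cr (cr u v) (cr w z) with hNdef
  have hXN : cr X N = 0 := by
    by_contra hxn
    have hdN1 : dt (cr u v) N = 0 := dt_cr_self_left (cr u v) (cr w z)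
    have hdN2 : dt (cr w z) N = 0 := dt_cr_self_right (cr u v) (cr w z)
    have e1 : cr (cr X N) (cr u v) = 0 := cr_cr_eq_zero h1 hdN1
    have e2 : cr (cr X N) (cr w z) = 0 := cr_cr_eq_zero h2 hdN2
    obtain ⟨t1, ht1⟩ := cr_zero_dep e1 hxn
    obtain ⟨t2, ht2⟩ := cr_zero_dep e2 hxn
    have ht10 : t1 ≠ 0 := by
      rintro rfl; rw [zero_smul] at ht1; exact hL1 ht1
    have ht20 : t2 ≠ 0 := by
      rintro rfl; rw [zero_smul] at ht2; exact hL2 ht2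
    apply hnd
    constructor
    · rw [collin_iff]
      have hw : dt (cr w z) w = 0 := dt_cr_left w z
      rw [ht2, dt_smul_left] at hw
      have hw' : dt (cr X N) w = 0 := (mul_eq_zero.mp hw).resolve_left ht20
      have heq : dt (cr u v) w = t1 * dt (cr X N) w := by rw [ht1, dt_smul_left]
      rw [heq, hw', mul_zero]
    · rw [collin_iff]
      have hz : dt (cr w z) z = 0 := dt_cr_right w z
      rw [ht2, dt_smul_left] at hz
      have hz' : dt (cr X N) z = 0 := (mul_eq_zero.mp hz).resolve_left ht20
      have heq : dt (cr u v) z = t1 * dt (cr X N) z := by rw [ht1, dt_smul_left]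
      rw [heq, hz', mul_zero]
  obtain ⟨t, ht⟩ := cr_zero_dep hXN hX0
  have ht0 : t ≠ 0 := by
    rintro rfl; rw [zero_smul] at ht; exact hN ht
  exact ⟨t⁻¹, inv_ne_zero ht0, by rw [ht, smul_smul, inv_mul_cancel₀ ht0, one_smul]⟩

/-- The core polynomial identity for the normalized Pappus configuration. -/
lemma pappus_core (a b p q r x y z : ℝ) (hg : p * y - q * x = 0) :
    dt (cr (cr (cr ![0,1,0] ![0,0,1]) (cr ![x,y,z] ![1,0,0]))
           (cr (cr ![a,b,0] ![0,0,1]) (cr ![p,q,r] ![1,0,0])))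
       (cr (cr (cr (cr ![1,0,0] ![x,y,z]) (cr ![p,q,r] ![a,b,0]))
               (cr (cr ![0,1,0] ![x,y,z]) (cr ![0,0,1] ![a,b,0])))
           (cr (cr (cr ![1,0,0] ![p,q,r]) (cr ![x,y,z] ![0,1,0]))
               (cr (cr ![a,b,0] ![p,q,r]) (cr ![0,0,1] ![0,1,0]))))
      = 0 := by
  simp only [dt, cr0, cr1, cr2, Matrix.cons_val_zero, Matrix.cons_val_one,
    Matrix.head_cons, Matrix.cons_val_two, Matrix.tail_cons]
  linear_combination (a^2*b^2*p*q*r*z^3 - a*b^3*p*r^2*x*z^2 + a^3*b*q*r^2*y*z^2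
    - a^2*b^2*r^3*x*y*z - a^3*b*q^2*r*z^3 + a^2*b^2*q*r^2*x*z^2) * hg

/-- **Generalized Pappus theorem.**  Let `A₁, A₂, A₃` lie on a line `ℓ` and
`B₁, B₂, B₃` on another line `m`, with none of the six points the intersection
of `ℓ` and `m`.  For each permutation `(i,j,k)` of `(1,2,3)` let
`Q i j = A_iB_k ∩ B_jA_k`.  Then the lines `Q₁₂Q₂₁`, `Q₁₃Q₃₁`, `Q₂₃Q₃₂`
are concurrent. -/
theorem generalized_pappus
    (A1 A2 A3 B1 B2 B3 Q12 Q21 Q13 Q31 Q23 Q32 : Fin 3 → ℝ)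
    (hA1 : A1 ≠ 0) (hA2 : A2 ≠ 0) (hA3 : A3 ≠ 0)
    (hB1 : B1 ≠ 0) (hB2 : B2 ≠ 0) (hB3 : B3 ≠ 0)
    (hAcol : collin A1 A2 A3) (hBcol : collin B1 B2 B3)
    (hdistinct : List.Pairwise (fun u v => LinearIndependent ℝ ![u, v])
      [A1, A2, A3, B1, B2, B3])
    (hA1m : ¬ collin B1 B2 A1) (hA2m : ¬ collin B1 B2 A2)
    (hA3m : ¬ collin B1 B2 A3)
    (hB1l : ¬ collin A1 A2 B1) (hB2l : ¬ collin A1 A2 B2)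
    (hB3l : ¬ collin A1 A2 B3)
    (hQ12 : IsInter A1 B3 B2 A3 Q12)
    (hQ21 : IsInter A2 B3 B1 A3 Q21)
    (hQ13 : IsInter A1 B2 B3 A2 Q13)
    (hQ31 : IsInter A3 B2 B1 A2 Q31)
    (hQ23 : IsInter A2 B1 B3 A1 Q23)
    (hQ32 : IsInter A3 B1 B2 A1 Q32)
    (hL1 : LinearIndependent ℝ ![Q12, Q21])
    (hL2 : LinearIndependent ℝ ![Q13, Q31])
    (hL3 : LinearIndependent ℝ ![Q23, Q32])
    (hL12 : ¬ (collin Q12 Q21 Q13 ∧ collin Q12 Q21 Q31))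
    (hL13 : ¬ (collin Q12 Q21 Q23 ∧ collin Q12 Q21 Q32))
    (hL23 : ¬ (collin Q13 Q31 Q23 ∧ collin Q13 Q31 Q32)) :
    ∃ X : Fin 3 → ℝ, X ≠ 0 ∧
      collin Q12 Q21 X ∧ collin Q13 Q31 X ∧ collin Q23 Q32 X := by
  classical
  set M : Matrix (Fin 3) (Fin 3) ℝ := Matrix.of ![A1, A2, B1] with hMdef
  have hdM : IsUnit M.det := by
    rw [isUnit_iff_ne_zero]
    intro h
    exact hB1l h
  set φ : (Fin 3 → ℝ) → (Fin 3 → ℝ) := fun P => Matrix.vecMul P M⁻¹ with hφdef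
  set ψ : (Fin 3 → ℝ) → (Fin 3 → ℝ) := fun P => Matrix.vecMul P M with hψdef
  have hψφ : ∀ P, ψ (φ P) = P := by
    intro P
    show Matrix.vecMul (Matrix.vecMul P M⁻¹) M = P
    rw [Matrix.vecMul_vecMul, Matrix.nonsing_inv_mul M hdM, Matrix.vecMul_one]
  have hφψ : ∀ P, φ (ψ P) = P := by
    intro P
    show Matrix.vecMul (Matrix.vecMul P M) M⁻¹ = P
    rw [Matrix.vecMul_vecMul, Matrix.mul_nonsing_inv M hdM, Matrix.vecMul_one]
  have hφ0 : ∀ P, P ≠ 0 → φ P ≠ 0 := by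
    intro P hP h
    apply hP
    rw [← hψφ P, h]
    show Matrix.vecMul 0 M = 0
    exact Matrix.zero_vecMul M
  have hψ0 : ∀ P, P ≠ 0 → ψ P ≠ 0 := by
    intro P hP h
    apply hP
    rw [← hφψ P, h]
    show Matrix.vecMul 0 M⁻¹ = 0
    exact Matrix.zero_vecMul M⁻¹
  have hφadd : ∀ P R : Fin 3 → ℝ, ∀ s t : ℝ, φ (s • P + t • R) = s • φ P + t • φ R := by
    intro P R s t
    show Matrix.vecMul (s • P + t • R) M⁻¹
      = s • Matrix.vecMul P M⁻¹ + t • Matrix.vecMul R M⁻¹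
    rw [Matrix.add_vecMul, Matrix.smul_vecMul, Matrix.smul_vecMul]
  have hrows : ∀ u v w : Fin 3 → ℝ,
      Matrix.of ![φ u, φ v, φ w] = Matrix.of ![u, v, w] * M⁻¹ := by
    intro u v w
    ext i j
    fin_cases i <;>
      simp [hφdef, Matrix.vecMul, Matrix.mul_apply, dotProduct]
  have hdMinv : M⁻¹.det ≠ 0 := by
    have h1 : M⁻¹.det * M.det = 1 := by
      rw [← Matrix.det_mul, Matrix.nonsing_inv_mul M hdM, Matrix.det_one]
    intro h
    rw [h, zero_mul] at h1
    norm_num at h1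
  have hcoll : ∀ u v w : Fin 3 → ℝ, collin u v w ↔ collin (φ u) (φ v) (φ w) := by
    intro u v w
    unfold collin
    rw [hrows, Matrix.det_mul]
    constructor
    · intro h; rw [h, zero_mul]
    · intro h
      rcases mul_eq_zero.mp h with h' | h'
      · exact h'
      · exact absurd h' hdMinv
  have hli : ∀ u v : Fin 3 → ℝ, LinearIndependent ℝ ![u, v] →
      LinearIndependent ℝ ![φ u, φ v] := by
    intro u v h
    rw [LinearIndependent.pair_iff] at h ⊢
    intro s t hst
    apply h s t
    have h1 : φ (s • u + t • v) = 0 := by rw [hφadd]; exact hst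
    have h2 := congrArg ψ h1
    rw [hψφ] at h2
    rw [h2]
    show Matrix.vecMul 0 M = 0
    exact Matrix.zero_vecMul M
  have hinter : ∀ u v w z X : Fin 3 → ℝ, IsInter u v w z X →
      IsInter (φ u) (φ v) (φ w) (φ z) (φ X) := by
    intro u v w z X ⟨h0, h1, h2, h3, h4, h5⟩
    exact ⟨hφ0 X h0, hli u v h1, hli w z h2, (hcoll u v X).mp h3, (hcoll w z X).mp h4,
      fun ⟨ha, hb⟩ => h5 ⟨(hcoll u v w).mpr ha, (hcoll u v z).mpr hb⟩⟩
  have hMrow : ∀ P : Fin 3 → ℝ, ψ P = fun j => P 0 * A1 j + P 1 * A2 j + P 2 * B1 j := by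
    intro P
    funext j
    show Matrix.vecMul P M j = _
    rw [Matrix.vecMul, dotProduct, Fin.sum_univ_three]
    simp [hMdef]
  have ha1 : φ A1 = ![1, 0, 0] := by
    have h : ψ ![1, 0, 0] = A1 := by
      rw [hMrow]; funext j; simp
    rw [← h, hφψ]
  have ha2 : φ A2 = ![0, 1, 0] := by
    have h : ψ ![0, 1, 0] = A2 := by
      rw [hMrow]; funext j; simp
    rw [← h, hφψ]
  have hb1 : φ B1 = ![0, 0, 1] := by
    have h : ψ ![0, 0, 1] = B1 := by
      rw [hMrow]; funext j; simp
    rw [← h, hφψ]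
  have ha3c : φ A3 2 = 0 := by
    have h := (hcoll A1 A2 A3).mp hAcol
    rw [ha1, ha2, collin_iff] at h
    simp only [dt, cr0, cr1, cr2, Matrix.cons_val_zero, Matrix.cons_val_one,
      Matrix.head_cons, Matrix.cons_val_two, Matrix.tail_cons] at h
    linarith
  have ha3 : φ A3 = ![φ A3 0, φ A3 1, 0] := by
    rw [← ha3c]; exact vec3_eta (φ A3)
  have hb2v : φ B2 = ![φ B2 0, φ B2 1, φ B2 2] := vec3_eta (φ B2)
  have hb3v : φ B3 = ![φ B3 0, φ B3 1, φ B3 2] := vec3_eta (φ B3)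
  have hg : φ B2 0 * φ B3 1 - φ B2 1 * φ B3 0 = 0 := by
    have h := (hcoll B1 B2 B3).mp hBcol
    rw [hb1, collin_iff] at h
    simp only [dt, cr0, cr1, cr2, Matrix.cons_val_zero, Matrix.cons_val_one,
      Matrix.head_cons, Matrix.cons_val_two, Matrix.tail_cons] at h
    linarith
  obtain ⟨c12, hc12, h12⟩ := isInter_rep (hinter _ _ _ _ _ hQ12)
  obtain ⟨c21, hc21, h21⟩ := isInter_rep (hinter _ _ _ _ _ hQ21)
  obtain ⟨c13, hc13, h13⟩ := isInter_rep (hinter _ _ _ _ _ hQ13)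
  obtain ⟨c31, hc31, h31⟩ := isInter_rep (hinter _ _ _ _ _ hQ31)
  obtain ⟨c23, hc23, h23⟩ := isInter_rep (hinter _ _ _ _ _ hQ23)
  obtain ⟨c32, hc32, h32⟩ := isInter_rep (hinter _ _ _ _ _ hQ32)
  set xx : Fin 3 → ℝ := cr (cr (φ Q12) (φ Q21)) (cr (φ Q13) (φ Q31)) with hxxdef
  have hxx0 : xx ≠ 0 := by
    apply cr_cr_ne_zero (hli _ _ hL1) (hli _ _ hL2)
    intro ⟨hA, hB⟩
    exact hL12 ⟨(hcoll _ _ _).mpr hA, (hcoll _ _ _).mpr hB⟩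
  refine ⟨ψ xx, hψ0 xx hxx0, ?_, ?_, ?_⟩
  · rw [hcoll Q12 Q21 (ψ xx), hφψ, collin_iff]
    exact dt_cr_self_left _ _
  · rw [hcoll Q13 Q31 (ψ xx), hφψ, collin_iff]
    exact dt_cr_self_right _ _
  · rw [hcoll Q23 Q32 (ψ xx), hφψ, collin_iff, hxxdef]
    rw [h12, h21, h13, h31, h23, h32]
    rw [ha1, ha2, hb1, ha3, hb2v, hb3v]
    simp only [cr_smul_left, cr_smul_right, dt_smul_left, dt_smul_right]
    rw [pappus_core (φ A3 0) (φ A3 1) (φ B2 0) (φ B2 1) (φ B2 2)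
      (φ B3 0) (φ B3 1) (φ B3 2) hg]
    ring
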